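/- Per-step inequality: if f is β-smooth, 0 < η < 1/β, ε > 1/(2η(1−βη)), ρ = 2ηε(1−βη) − 1, and x⁺ = x − η∇f(x) + v, then (ρ/(2ε))|∇f(x)|² ≤ f(x) − f(x⁺) + (ε/2 + β)|v|². -/

import Mathlib

/-!
The descent lemma `f y ≤ f x + ⟪∇f x, y - x⟫ + β/2 ‖y - x‖²` at `y = x⁺` leaves the cross term
`(1 - βη) ⟪∇f x, v⟫`, which Young's inequality with weight `ε` splits into
`(1 - βη)² ‖∇f x‖² / (2ε) + ε/2 ‖v‖²`. Since `0 < 1 - βη ≤ 1`, the resulting coefficients are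
bounded by `ρ / (2ε) = η(1 - βη) - 1/(2ε)` and `ε/2 + β`.
-/

open InnerProductSpace Set

variable {F : Type*} [NormedAddCommGroup F] [InnerProductSpace ℝ F]

theorem real_inner_le_sq_div_add_mul_sq (a b : F) {ε : ℝ} (hε : 0 < ε) :
    ⟪a, b⟫_ℝ ≤ ‖a‖ ^ 2 / (2 * ε) + ε / 2 * ‖b‖ ^ 2 := by
  have hamgm : ‖a‖ * ‖b‖ ≤ ‖a‖ ^ 2 / (2 * ε) + ε / 2 * ‖b‖ ^ 2 := by
    rw [div_add' _ _ _ (by positivity), le_div_iff₀ (by positivity)]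
    nlinarith [sq_nonneg (‖a‖ - ε * ‖b‖)]
  exact (real_inner_le_norm a b).trans hamgm

variable [CompleteSpace F]

theorem DifferentiableAt.hasDerivAt_comp_add_smul {f : F → ℝ} {x u : F} {t : ℝ}
    (hf : DifferentiableAt ℝ f (x + t • u)) :
    HasDerivAt (fun s : ℝ => f (x + s • u)) ⟪gradient f (x + t • u), u⟫_ℝ t := by
  have hline : HasDerivAt (fun s : ℝ => x + s • u) u t := by
    simpa using ((hasDerivAt_id t).smul_const u).const_add x
  simpa [toDual_apply_apply, Function.comp_def] using
    hf.hasGradientAt.hasFDerivAt.comp_hasDerivAt t hline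

theorem le_add_inner_gradient_add_mul_norm_sq {f : F → ℝ} {β : ℝ} (hf : Differentiable ℝ f)
    (hlip : ∀ x y, ‖gradient f x - gradient f y‖ ≤ β * ‖x - y‖) (x y : F) :
    f y ≤ f x + ⟪gradient f x, y - x⟫_ℝ + β / 2 * ‖y - x‖ ^ 2 := by
  set u := y - x
  set g := gradient f x
  -- `f` along the segment minus its quadratic upper model is antitone, so `φ 1 ≤ φ 0`.
  set φ : ℝ → ℝ := fun t => f (x + t • u) - t * ⟪g, u⟫_ℝ - β / 2 * t ^ 2 * ‖u‖ ^ 2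
  have hφ' : ∀ t, HasDerivAt φ (⟪gradient f (x + t • u), u⟫_ℝ - ⟪g, u⟫_ℝ - β * t * ‖u‖ ^ 2) t := by
    intro t
    refine (((hf (x + t • u)).hasDerivAt_comp_add_smul.sub
      ((hasDerivAt_id t).mul_const ⟪g, u⟫_ℝ)).sub
      (((hasDerivAt_pow 2 t).const_mul (β / 2)).mul_const (‖u‖ ^ 2))).congr_deriv ?_
    simp only [Nat.cast_ofNat]
    ring
  have hanti : AntitoneOn φ (Ici 0) := by
    refine antitoneOn_of_hasDerivWithinAt_nonpos (convex_Ici 0)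
      (fun t _ => (hφ' t).continuousAt.continuousWithinAt)
      (fun t _ => (hφ' t).hasDerivWithinAt) fun t ht => ?_
    rw [interior_Ici, mem_Ioi] at ht
    have hlip_t : ‖gradient f (x + t • u) - g‖ ≤ β * (t * ‖u‖) := by
      simpa [norm_smul, abs_of_pos ht] using hlip (x + t • u) x
    calc ⟪gradient f (x + t • u), u⟫_ℝ - ⟪g, u⟫_ℝ - β * t * ‖u‖ ^ 2
        = ⟪gradient f (x + t • u) - g, u⟫_ℝ - β * t * ‖u‖ ^ 2 := by rw [inner_sub_left]
      _ ≤ ‖gradient f (x + t • u) - g‖ * ‖u‖ - β * t * ‖u‖ ^ 2 := by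
        gcongr; exact real_inner_le_norm _ _
      _ ≤ β * (t * ‖u‖) * ‖u‖ - β * t * ‖u‖ ^ 2 := by gcongr
      _ = 0 := by ring
  have hφ01 := hanti (mem_Ici.2 le_rfl) (mem_Ici.2 zero_le_one) zero_le_one
  simp only [φ, u, zero_smul, add_zero, one_smul, add_sub_cancel] at hφ01
  linarith

theorem perturbed_gradient_step_le {f : F → ℝ} {β : ℝ} (hf : Differentiable ℝ f)
    (hlip : ∀ x y, ‖gradient f x - gradient f y‖ ≤ β * ‖x - y‖) (η : ℝ) (x v : F) :
    f (x - η • gradient f x + v) ≤ f x - η * (1 - β * η / 2) * ‖gradient f x‖ ^ 2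
      + (1 - β * η) * ⟪gradient f x, v⟫_ℝ + β / 2 * ‖v‖ ^ 2 := by
  have hdesc := le_add_inner_gradient_add_mul_norm_sq hf hlip x (x - η • gradient f x + v)
  rw [show x - η • gradient f x + v - x = v - η • gradient f x by abel, norm_sub_sq_real,
    inner_sub_right, real_inner_smul_right, real_inner_smul_right, real_inner_self_eq_norm_sq,
    norm_smul, Real.norm_eq_abs, mul_pow, sq_abs, real_inner_comm (gradient f x) v] at hdesc
  linarith

theorem stmt_5 {d : ℕ} (f : EuclideanSpace ℝ (Fin d) → ℝ) (β η ε ρ : ℝ) (hβ : 0 < β)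
    (hf : Differentiable ℝ f)
    (hlip : ∀ x y, ‖gradient f x - gradient f y‖ ≤ β * ‖x - y‖)
    (hη0 : 0 < η) (hηβ : η < 1 / β)
    (hε : ε > 1 / (2 * η * (1 - β * η)))
    (hρ : ρ = 2 * η * ε * (1 - β * η) - 1)
    (x v xp : EuclideanSpace ℝ (Fin d))
    (hxp : xp = x - η • gradient f x + v) :
    (ρ / (2 * ε)) * ‖gradient f x‖ ^ 2 ≤ f x - f xp + (ε / 2 + β) * ‖v‖ ^ 2 := by
  have hβη : β * η < 1 := by rwa [lt_div_iff₀ hβ, mul_comm] at hηβ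
  have hε0 : 0 < ε := lt_trans (by have := sub_pos.2 hβη; positivity) hε
  have hstep := perturbed_gradient_step_le hf hlip η x v
  have hyoung := real_inner_le_sq_div_add_mul_sq ((1 - β * η) • gradient f x) v hε0
  rw [real_inner_smul_left, norm_smul, mul_pow, Real.norm_eq_abs, sq_abs] at hyoung
  set g := gradient f x
  have hcoef : (1 - β * η) ^ 2 * ‖g‖ ^ 2 / (2 * ε) ≤ ‖g‖ ^ 2 / (2 * ε) := by
    gcongr ?_ / _
    exact mul_le_of_le_one_left (sq_nonneg _) (by nlinarith [mul_pos hβ hη0])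
  have hρε : ρ / (2 * ε) * ‖g‖ ^ 2 = η * (1 - β * η) * ‖g‖ ^ 2 - ‖g‖ ^ 2 / (2 * ε) := by
    rw [hρ]
    field_simp
  subst hxp
  rw [hρε]
  linarith [mul_nonneg (mul_nonneg hβ.le (sq_nonneg η)) (sq_nonneg ‖g‖),
    mul_nonneg hβ.le (sq_nonneg ‖v‖)]
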